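/- Let f : ℝⁿ → ℝ be differentiable, λ > 0, θ > 0, κ_f > 0, κ_g ≥ 0, κ_H ∈ (0,1] and f_k ∈ ℝ. Let s* ∈ ℝᵐ satisfy the stopping condition ‖∇φ̃(s*) + λ‖g‖·s*‖ ≤ θ‖s*‖ and the decrease condition φ̃(s*) − φ̃(0) ≤ −(λ‖g‖/2)‖s*‖², let the restriction condition ‖Rg‖ ≥ κ_H‖g‖ hold, and let s_k ∈ ℝⁿ satisfy the compatibility condition ⟨g, s_k⟩ = ⟨Rg, s*⟩. Assume the linear model m(y) = f_k + ⟨g, y − x⟩ is accurate at the two points, i.e. |f(x) − f_k| ≤ κ_f/λ² and |f(x + s_k) − (f_k + ⟨g, s_k⟩)| ≤ κ_f/λ², that the gradient estimate is accurate, i.e. ‖∇f(x) − g‖ ≤ κ_g/λ, and that λ‖∇f(x)‖ ≥ max{L_φ + θ + κ_g, 64κ_f/κ_H² + κ_g, 2L_φ + κ_g}. Then f(x + s_k) − f(x) ≤ −C₁·‖∇f(x)‖/λ, where C₁ = (κ_H²/32)·max{(L_φ + θ)/(L_φ + θ + κ_g), 64κ_f/(64κ_f + κ_g·κ_H²), 2L_φ/(2L_φ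 + κ_g)}. -/

import Mathlib

/-!
The stopping condition and the Lipschitz gradient give
`‖∇φ̃(0)‖ ≤ (L_φ + θ + λ‖g‖)‖s*‖ ≤ 2λ‖g‖‖s*‖`, while the descent lemma and the decrease condition
give `⟪∇φ̃(0), s*⟫ ≤ -(λ‖g‖ - L_φ)/2 ‖s*‖² ≤ -λ‖g‖‖s*‖²/4`. Together, with `∇φ̃(0) = Rg`,
`⟪Rg, s*⟫ ≤ -‖Rg‖²/(16λ‖g‖) ≤ -κ_H²‖g‖/(16λ)`; compatibility makes this the linear-model
decrease along `s_k`, and the model inaccuracy costs at most `2κ_f/λ²`. The lower bound on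
`λ‖∇f(x)‖` makes `‖g‖ ≥ ‖∇f(x)‖ - κ_g/λ` at least `C‖∇f(x)‖` for each ratio `C` in the maximum,
and makes the model inaccuracy at most half of the guaranteed decrease.
-/

open RealInnerProductSpace

section Gradient

variable {E : Type*} [NormedAddCommGroup E] [InnerProductSpace ℝ E] [CompleteSpace E]

theorem hasGradientAt_comp_const_add_add_inner {φ : E → ℝ} {a s : E}
    (hφ : DifferentiableAt ℝ φ (a + s)) (c : E) :
    HasGradientAt (fun s => φ (a + s) + ⟪c, s⟫) (gradient φ (a + s) + c) s := by
  rw [hasGradientAt_iff_hasFDerivAt]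
  have hshift := hφ.hasGradientAt.hasFDerivAt.comp s ((hasFDerivAt_id s).const_add a)
  refine (hshift.add (innerSL ℝ c).hasFDerivAt).congr_fderiv ?_
  ext y
  simp [InnerProductSpace.toDual_apply_apply]

/-- The lower half of the descent lemma. -/
theorem add_inner_gradient_sub_le_of_lipschitz_gradient {f : E → ℝ} (hf : Differentiable ℝ f)
    {L : ℝ} (hLip : ∀ a b, ‖gradient f a - gradient f b‖ ≤ L * ‖a - b‖) (a v : E) :
    f a + ⟪gradient f a, v⟫ - L / 2 * ‖v‖ ^ 2 ≤ f (a + v) := by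
  set u : ℝ → ℝ := fun t => f (a + t • v) - t * ⟪gradient f a, v⟫ + L * ‖v‖ ^ 2 * t ^ 2 / 2
  have hu : ∀ t, HasDerivAt u
      (⟪gradient f (a + t • v) - gradient f a, v⟫ + L * ‖v‖ ^ 2 * t) t := by
    intro t
    have hline : HasDerivAt (fun t : ℝ => a + t • v) v t := by
      simpa using ((hasDerivAt_id t).smul_const v).const_add a
    have hcomp := (hf (a + t • v)).hasFDerivAt.comp_hasDerivAt t hline
    rw [← inner_gradient_left] at hcomp
    have hquad := ((hasDerivAt_pow 2 t).const_mul (L * ‖v‖ ^ 2)).div_const 2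
    exact ((hcomp.sub ((hasDerivAt_id t).mul_const ⟪gradient f a, v⟫)).add hquad).congr_deriv
      (by rw [inner_sub_left]; push_cast; ring)
  have hmono : MonotoneOn u (Set.Icc 0 1) := by
    refine monotoneOn_of_deriv_nonneg (convex_Icc 0 1)
      (fun t _ => (hu t).continuousAt.continuousWithinAt)
      (fun t _ => (hu t).differentiableAt.differentiableWithinAt) fun t ht => ?_
    rw [interior_Icc] at ht
    rw [(hu t).deriv]
    have hgrad : ‖gradient f (a + t • v) - gradient f a‖ ≤ L * (t * ‖v‖) := by
      simpa [norm_smul, abs_of_pos ht.1] using hLip (a + t • v) a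
    nlinarith [neg_abs_le ⟪gradient f (a + t • v) - gradient f a, v⟫,
      abs_real_inner_le_norm (gradient f (a + t • v) - gradient f a) v, norm_nonneg v]
  have h01 := hmono (Set.left_mem_Icc.2 zero_le_one) (Set.right_mem_Icc.2 zero_le_one) zero_le_one
  simp only [u, zero_smul, one_smul, add_zero, zero_mul, one_mul, one_pow, mul_one, sub_zero,
    zero_pow two_ne_zero, mul_zero, zero_div] at h01
  linarith

variable {ψ : E → ℝ} {L θ μ : ℝ} {s : E}

theorem norm_gradient_zero_le_of_stop (hLip : ∀ a b, ‖gradient ψ a - gradient ψ b‖ ≤ L * ‖a - b‖)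
    (hμ : 0 ≤ μ) (hstop : ‖gradient ψ s + μ • s‖ ≤ θ * ‖s‖) :
    ‖gradient ψ 0‖ ≤ (L + θ + μ) * ‖s‖ := by
  have hLip0 : ‖gradient ψ 0 - gradient ψ s‖ ≤ L * ‖s‖ := by simpa using hLip 0 s
  calc ‖gradient ψ 0‖
      = ‖(gradient ψ 0 - gradient ψ s) + (gradient ψ s + μ • s) - μ • s‖ := by congr 1; abel
    _ ≤ ‖gradient ψ 0 - gradient ψ s‖ + ‖gradient ψ s + μ • s‖ + ‖μ • s‖ :=
        (norm_sub_le _ _).trans (by gcongr; exact norm_add_le _ _)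
    _ ≤ L * ‖s‖ + θ * ‖s‖ + μ * ‖s‖ := by
        rw [norm_smul, Real.norm_of_nonneg hμ]; gcongr
    _ = (L + θ + μ) * ‖s‖ := by ring

theorem inner_gradient_zero_le_of_decrease (hψ : Differentiable ℝ ψ)
    (hLip : ∀ a b, ‖gradient ψ a - gradient ψ b‖ ≤ L * ‖a - b‖)
    (hdecr : ψ s - ψ 0 ≤ -(μ / 2) * ‖s‖ ^ 2) :
    ⟪gradient ψ 0, s⟫ ≤ (L - μ) / 2 * ‖s‖ ^ 2 := by
  have := add_inner_gradient_sub_le_of_lipschitz_gradient hψ hLip 0 s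
  rw [zero_add] at this
  linarith

theorem inner_gradient_zero_le_of_stop_of_decrease (hψ : Differentiable ℝ ψ)
    (hLip : ∀ a b, ‖gradient ψ a - gradient ψ b‖ ≤ L * ‖a - b‖)
    (hμ : 0 < μ) (hLθμ : L + θ ≤ μ) (hLμ : 2 * L ≤ μ)
    (hstop : ‖gradient ψ s + μ • s‖ ≤ θ * ‖s‖) (hdecr : ψ s - ψ 0 ≤ -(μ / 2) * ‖s‖ ^ 2) :
    ⟪gradient ψ 0, s⟫ ≤ -‖gradient ψ 0‖ ^ 2 / (16 * μ) := by
  have hnorm : ‖gradient ψ 0‖ ≤ 2 * μ * ‖s‖ :=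
    (norm_gradient_zero_le_of_stop hLip hμ.le hstop).trans (by gcongr; linarith)
  have hinner := inner_gradient_zero_le_of_decrease hψ hLip hdecr
  rw [le_div_iff₀' (by positivity)]
  have hsq : ‖gradient ψ 0‖ ^ 2 ≤ (2 * μ * ‖s‖) ^ 2 := pow_le_pow_left₀ (norm_nonneg _) hnorm 2
  nlinarith [mul_le_mul_of_nonneg_left hinner (by positivity : (0 : ℝ) ≤ 16 * μ),
    mul_nonneg (mul_nonneg (sub_nonneg.2 hLμ) hμ.le) (sq_nonneg ‖s‖)]

theorem inner_le_of_corrected_model_step {φ ψ : E → ℝ} (hφ : Differentiable ℝ φ)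
    (hLip : ∀ a b, ‖gradient φ a - gradient φ b‖ ≤ L * ‖a - b‖) {y c : E}
    (hψ : ∀ s, ψ s = φ (y + s) + ⟪c - gradient φ y, s⟫)
    (hμ : 0 < μ) (hLθμ : L + θ ≤ μ) (hLμ : 2 * L ≤ μ)
    (hstop : ‖gradient ψ s + μ • s‖ ≤ θ * ‖s‖) (hdecr : ψ s - ψ 0 ≤ -(μ / 2) * ‖s‖ ^ 2) :
    ⟪c, s⟫ ≤ -‖c‖ ^ 2 / (16 * μ) := by
  obtain rfl : ψ = _ := funext hψ
  have hgrad : ∀ s, HasGradientAt (fun s => φ (y + s) + ⟪c - gradient φ y, s⟫)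
      (gradient φ (y + s) + (c - gradient φ y)) s :=
    fun s => hasGradientAt_comp_const_add_add_inner (hφ _) _
  have hLipψ : ∀ a b, ‖gradient (fun s => φ (y + s) + ⟪c - gradient φ y, s⟫) a -
      gradient (fun s => φ (y + s) + ⟪c - gradient φ y, s⟫) b‖ ≤ L * ‖a - b‖ := fun a b => by
    simpa [(hgrad _).gradient] using hLip (y + a) (y + b)
  have h := inner_gradient_zero_le_of_stop_of_decrease (fun s => (hgrad s).differentiableAt)
    hLipψ hμ hLθμ hLμ hstop hdecr
  rwa [(hgrad 0).gradient, add_zero, add_sub_cancel] at h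

end Gradient

theorem le_div_add_mul {a κ t : ℝ} (ha : 0 < a) (hκ : 0 ≤ κ) (ht : a + κ ≤ t) :
    a ≤ a / (a + κ) * t := by
  rw [div_mul_eq_mul_div, le_div_iff₀ (by positivity)]
  gcongr

theorem div_add_mul_le_of_mul_sub_le {a κ lam G r : ℝ} (ha : 0 < a) (hκ : 0 ≤ κ) (hlam : 0 < lam)
    (h : a + κ ≤ lam * G) (hr : lam * G - κ ≤ lam * r) : a / (a + κ) * G ≤ r := by
  rw [div_mul_eq_mul_div, div_le_iff₀ (by positivity)]
  refine le_of_mul_le_mul_left ?_ hlam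
  nlinarith

theorem sub_le_add_of_abs_sub_le {u v c d ε : ℝ} (hu : |u - c| ≤ ε) (hv : |v - (c + d)| ≤ ε) :
    v - u ≤ d + 2 * ε := by
  linarith [(abs_le.1 hu).1, (abs_le.1 hv).2]

theorem stmt_10_general (n m : ℕ)
    (φ : EuclideanSpace ℝ (Fin m) → ℝ) (hφ : Differentiable ℝ φ)
    (Lφ : ℝ) (hLφ : 0 < Lφ)
    (hLip : ∀ a b : EuclideanSpace ℝ (Fin m),
      ‖gradient φ a - gradient φ b‖ ≤ Lφ * ‖a - b‖)
    (x g : EuclideanSpace ℝ (Fin n))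
    (R : EuclideanSpace ℝ (Fin n) →ₗ[ℝ] EuclideanSpace ℝ (Fin m))
    (φt : EuclideanSpace ℝ (Fin m) → ℝ)
    (hφt : ∀ s, φt s = φ (R x + s) + ⟪R g - gradient φ (R x), s⟫)
    (f : EuclideanSpace ℝ (Fin n) → ℝ)
    (lam θ κf κg κH fk : ℝ)
    (hlam : 0 < lam) (hθ : 0 < θ) (hκf : 0 < κf) (hκg : 0 ≤ κg)
    (hκH : κH ∈ Set.Ioc (0 : ℝ) 1)
    (sstar : EuclideanSpace ℝ (Fin m))
    (hstop : ‖gradient φt sstar + (lam * ‖g‖) • sstar‖ ≤ θ * ‖sstar‖)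
    (hdecr : φt sstar - φt 0 ≤ -(lam * ‖g‖ / 2) * ‖sstar‖ ^ 2)
    (hrestr : ‖R g‖ ≥ κH * ‖g‖)
    (sk : EuclideanSpace ℝ (Fin n))
    (hcompat : ⟪g, sk⟫ = ⟪R g, sstar⟫)
    (hacc0 : |f x - fk| ≤ κf / lam ^ 2)
    (haccs : |f (x + sk) - (fk + ⟪g, sk⟫)| ≤ κf / lam ^ 2)
    (hgrad : ‖gradient f x - g‖ ≤ κg / lam)
    (hbig : lam * ‖gradient f x‖ ≥
      max (max (Lφ + θ + κg) (64 * κf / κH ^ 2 + κg)) (2 * Lφ + κg)) :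
    f (x + sk) - f x ≤
      -(κH ^ 2 / 32 *
          max (max ((Lφ + θ) / (Lφ + θ + κg)) (64 * κf / (64 * κf + κg * κH ^ 2)))
            (2 * Lφ / (2 * Lφ + κg))) *
        (‖gradient f x‖ / lam) := by
  obtain ⟨hκH, -⟩ := hκH
  simp only [ge_iff_le, max_le_iff] at hbig
  obtain ⟨⟨hbig₁, hbig₂⟩, hbig₃⟩ := hbig
  set G := ‖gradient f x‖
  set M := max (max ((Lφ + θ) / (Lφ + θ + κg)) (64 * κf / (64 * κf + κg * κH ^ 2)))
    (2 * Lφ / (2 * Lφ + κg))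
  have hβ : 64 * κf / (64 * κf + κg * κH ^ 2) = 64 * κf / κH ^ 2 / (64 * κf / κH ^ 2 + κg) := by
    field_simp
  have hμ : lam * G - κg ≤ lam * ‖g‖ := by
    have := mul_le_mul_of_nonneg_left ((norm_sub_norm_le _ _).trans hgrad) hlam.le
    rw [mul_sub, mul_div_cancel₀ _ hlam.ne'] at this
    linarith
  have hMG : M * G ≤ ‖g‖ := by
    have hG : 0 ≤ G := norm_nonneg _
    simp only [M, hβ]
    rw [max_mul_of_nonneg _ _ hG, max_mul_of_nonneg _ _ hG]
    refine max_le (max_le ?_ ?_) ?_ <;> refine div_add_mul_le_of_mul_sub_le ?_ hκg hlam ?_ hμ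
    all_goals first | positivity | assumption
  have hdesc : ⟪R g, sstar⟫ ≤ -(κH ^ 2 * ‖g‖ / (16 * lam)) := by
    have hgpos : 0 < ‖g‖ := by nlinarith
    calc ⟪R g, sstar⟫ ≤ -‖R g‖ ^ 2 / (16 * (lam * ‖g‖)) :=
          inner_le_of_corrected_model_step hφ hLip hφt (by positivity) (by linarith)
            (by linarith) hstop hdecr
      _ ≤ -(κH * ‖g‖) ^ 2 / (16 * (lam * ‖g‖)) := by rw [neg_div, neg_div]; gcongr
      _ = -(κH ^ 2 * ‖g‖ / (16 * lam)) := by field_simp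
  have herr : 2 * (κf / lam ^ 2) ≤ κH ^ 2 * (M * G) / (32 * lam) := by
    have hβM : 64 * κf / κH ^ 2 ≤ M * (lam * G) := by
      refine (le_div_add_mul (by positivity) hκg hbig₂).trans ?_
      rw [← hβ]
      gcongr
      exact (le_max_right _ _).trans (le_max_left _ _)
    calc 2 * (κf / lam ^ 2) = 64 * κf / κH ^ 2 * κH ^ 2 / (32 * lam ^ 2) := by field_simp; ring
      _ ≤ M * (lam * G) * κH ^ 2 / (32 * lam ^ 2) := by gcongr
      _ = κH ^ 2 * (M * G) / (32 * lam) := by field_simp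
  calc f (x + sk) - f x ≤ ⟪R g, sstar⟫ + 2 * (κf / lam ^ 2) :=
        hcompat ▸ sub_le_add_of_abs_sub_le hacc0 haccs
    _ ≤ -(κH ^ 2 * (M * G) / (16 * lam)) + κH ^ 2 * (M * G) / (32 * lam) :=
        add_le_add (hdesc.trans (neg_le_neg (by gcongr))) herr
    _ = -(κH ^ 2 / 32 * M) * (G / lam) := by ring

/-- Guaranteed decrease of `f` along a coarse step, stated
in terms of the true gradient `∇f(x)`. -/
theorem stmt_10 (n m : ℕ) (hn : 0 < n) (hm : 0 < m)
    (φ : EuclideanSpace ℝ (Fin m) → ℝ) (hφ : Differentiable ℝ φ)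
    (Lφ : ℝ) (hLφ : 0 < Lφ)
    (hLip : ∀ a b : EuclideanSpace ℝ (Fin m),
      ‖gradient φ a - gradient φ b‖ ≤ Lφ * ‖a - b‖)
    (x g : EuclideanSpace ℝ (Fin n))
    (R : EuclideanSpace ℝ (Fin n) →ₗ[ℝ] EuclideanSpace ℝ (Fin m))
    (φt : EuclideanSpace ℝ (Fin m) → ℝ)
    (hφt : ∀ s, φt s = φ (R x + s) + ⟪R g - gradient φ (R x), s⟫)
    (f : EuclideanSpace ℝ (Fin n) → ℝ) (hf : Differentiable ℝ f)
    (lam θ κf κg κH fk : ℝ)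
    (hlam : 0 < lam) (hθ : 0 < θ) (hκf : 0 < κf) (hκg : 0 ≤ κg)
    (hκH : κH ∈ Set.Ioc (0 : ℝ) 1)
    (sstar : EuclideanSpace ℝ (Fin m))
    (hstop : ‖gradient φt sstar + (lam * ‖g‖) • sstar‖ ≤ θ * ‖sstar‖)
    (hdecr : φt sstar - φt 0 ≤ -(lam * ‖g‖ / 2) * ‖sstar‖ ^ 2)
    (hrestr : ‖R g‖ ≥ κH * ‖g‖)
    (sk : EuclideanSpace ℝ (Fin n))
    (hcompat : ⟪g, sk⟫ = ⟪R g, sstar⟫)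
    (hacc0 : |f x - fk| ≤ κf / lam ^ 2)
    (haccs : |f (x + sk) - (fk + ⟪g, sk⟫)| ≤ κf / lam ^ 2)
    (hgrad : ‖gradient f x - g‖ ≤ κg / lam)
    (hbig : lam * ‖gradient f x‖ ≥
      max (max (Lφ + θ + κg) (64 * κf / κH ^ 2 + κg)) (2 * Lφ + κg)) :
    f (x + sk) - f x ≤
      -(κH ^ 2 / 32 *
          max (max ((Lφ + θ) / (Lφ + θ + κg)) (64 * κf / (64 * κf + κg * κH ^ 2)))
            (2 * Lφ / (2 * Lφ + κg))) *
        (‖gradient f x‖ / lam) :=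
  stmt_10_general n m φ hφ Lφ hLφ hLip x g R φt hφt f lam θ κf κg κH fk hlam hθ hκf hκg hκH sstar
    hstop hdecr hrestr sk hcompat hacc0 haccs hgrad hbig
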